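/- arXiv:2305.15300 — 2 statements merged into one kernel-verified Lean document; each statement's English description precedes it below -/
import Mathlib

section
/- (Non-Archimedean interpolation theorem of Stein–Weiss.) Let V be a finite-dimensional complex vector space, π : V → Q a surjective linear map onto a complex vector space Q, H₀ a Hermitian norm on V, H₁ a Hermitian norm on Q, 𝓕 a filtration on V and 𝓖 a filtration on Q. Assume [H₀] ≥ H₁ (the quotient norm of H₀ dominates H₁ pointwise on Q) and [χ_𝓕] ≥ χ_𝓖 (the quotient of the non-Archimedean norm χ_𝓕 dominates χ_𝓖 pointwise on Q). Let H_t^𝓕 (t ≥ 0) be the geodesic ray of Hermitian norms on V associated with 𝓕 emanating from H₀, and H_t^𝓖 the geodesic ray on Q associated with 𝓖 emanating from H₁, both constructed via adapted orthonormal bases. Then for every t ≥ 0 the quotient norm of H_t^𝓕 dominates H_t^𝓖: for all q ∈ Q, inf{‖v‖_{H_t^𝓕} : v ∈ V, π(v) = q} ≥ ‖q‖_{H_t^𝓖}. -/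
open scoped BigOperators
open Filter Classical

noncomputable section

variable {V : Type*} [AddCommGroup V] [Module ℂ V]

/-- A filtration on a complex vector space `V`: a left-continuous, decreasing family of
subspaces which equals `⊤` for `t` small enough and `⊥` for `t` large enough. -/
structure IsVSFiltration (F : ℝ → Submodule ℂ V) : Prop where
  antitone : ∀ ⦃s t : ℝ⦄, s ≤ t → F t ≤ F s
  left_cont : ∀ t : ℝ, ∃ ε > 0, ∀ δ : ℝ, 0 < δ → δ < ε → F (t - δ) = F t
  eventually_top : ∃ t₀ : ℝ, ∀ t ≤ t₀, F t = ⊤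
  eventually_bot : ∃ t₁ : ℝ, ∀ t, t₁ ≤ t → F t = ⊥

/-- The weight of a vector with respect to a filtration. -/
def filtWeight (F : ℝ → Submodule ℂ V) (s : V) : ℝ :=
  sSup {l : ℝ | s ∈ F l}

/-- The non-Archimedean norm `χ_𝓕` associated with a filtration. -/
def filtChi (F : ℝ → Submodule ℂ V) (s : V) : ℝ :=
  if s = 0 then 0 else Real.exp (-(filtWeight F s))

/-- The jumping numbers `e_𝓕(j)` of a filtration. -/
def jumpNum (F : ℝ → Submodule ℂ V) (j : ℕ) : ℝ :=
  sSup {t : ℝ | j ≤ Module.finrank ℂ (F t)}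

/-- The norm associated with a Hermitian inner product. -/
def hnorm (c : InnerProductSpace.Core ℂ V) : V → ℝ :=
  fun v => Real.sqrt ((c.inner v v).re)

/-- The `j`-th element of the logarithmic relative spectrum of two norms. -/
def relSpec (N₀ N₁ : V → ℝ) (j : ℕ) : ℝ :=
  sSup {r : ℝ | ∃ W : Submodule ℂ V, Module.finrank ℂ W = j ∧
    r = sInf {x : ℝ | ∃ w ∈ W, w ≠ 0 ∧ x = Real.log (N₁ w / N₀ w)}}

/-- The distance `d_p` between two norms, `p ∈ [1, ∞)`. -/
def dp (p : ℝ) (N₀ N₁ : V → ℝ) : ℝ :=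
  ((∑ j ∈ Finset.Icc 1 (Module.finrank ℂ V), |relSpec N₀ N₁ j| ^ p) /
    (Module.finrank ℂ V : ℝ)) ^ (1 / p)

/-- The distance `d_∞` between two norms. -/
def dInf (N₀ N₁ : V → ℝ) : ℝ :=
  sSup {r : ℝ | ∃ j ∈ Finset.Icc 1 (Module.finrank ℂ V), r = |relSpec N₀ N₁ j|}

/-- A family of vectors is orthonormal with respect to a Hermitian inner product. -/
def OrthonormalFor (c : InnerProductSpace.Core ℂ V) {ι : Type*} (s : ι → V) : Prop :=
  ∀ i j, c.inner (s i) (s j) = if i = j then 1 else 0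

/-- A family of vectors is orthogonal with respect to a Hermitian inner product. -/
def OrthogonalFor (c : InnerProductSpace.Core ℂ V) {ι : Type*} (s : ι → V) : Prop :=
  ∀ i j, i ≠ j → c.inner (s i) (s j) = 0

/-- `c : ℝ → InnerProductSpace.Core ℂ V` is the geodesic ray of Hermitian norms emanating
from `c 0` associated with the filtration `F` via the adapted orthonormal basis `s`:
`s` is orthonormal for `c 0`, `s j ∈ 𝓕^{e_𝓕(j)} V`, and for each `t ≥ 0` the rescaled basis
`(exp (t e_𝓕(i)) • s i)` is orthonormal for `c t`. -/
def IsGeodesicRayFor (F : ℝ → Submodule ℂ V) {n : ℕ} (s : Fin n → V)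
    (c : ℝ → InnerProductSpace.Core ℂ V) : Prop :=
  OrthonormalFor (c 0) s ∧
  (∀ i : Fin n, s i ∈ F (jumpNum F (i.1 + 1))) ∧
  ∀ t : ℝ, 0 ≤ t → ∀ i j : Fin n,
    (c t).inner (Real.exp (t * jumpNum F (i.1 + 1)) • s i)
      (Real.exp (t * jumpNum F (j.1 + 1)) • s j) = if i = j then 1 else 0

/-- A (complex) norm on a vector space. -/
structure IsComplexNorm (N : V → ℝ) : Prop where
  eq_zero_iff : ∀ x : V, N x = 0 ↔ x = 0
  smul : ∀ (a : ℂ) (x : V), N (a • x) = ‖a‖ * N x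
  add_le : ∀ x y : V, N (x + y) ≤ N x + N y


/-- The quotient norm of a function `N` on `V` along a surjective linear map `π : V → Q`. -/
def quotNorm {V Q : Type*} [AddCommGroup V] [Module ℂ V] [AddCommGroup Q] [Module ℂ Q]
    (π : V →ₗ[ℂ] Q) (N : V → ℝ) : Q → ℝ :=
  fun q => sInf {r : ℝ | ∃ v : V, π v = q ∧ r = N v}

/-! In the coordinates of the adapted bases, rescaled by `exp (-t e)` and `exp (-t f)` where
`e`, `f` are the jumping numbers, the norms of the two rays at time `t` become standard `ℓ²` norms
and `π` becomes the matrix `exp (-t f) M exp (t e)`, with `M` the matrix of `π`. The domination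
at time `0` says that `M` is an `ℓ²` contraction; the domination of the non-Archimedean norms
says that `M j i ≠ 0` only if `e i ≤ f j`, so `z ↦ exp (-z f) M exp (z e)` is entire and bounded
on the right half-plane. On the imaginary axis it is `M` between unitary diagonal matrices, hence
a contraction, and Phragmén–Lindelöf carries this bound to `z = t` (Stein–Weiss interpolation). -/

open Matrix

lemma OrthonormalFor.hnorm_sum_smul {c : InnerProductSpace.Core ℂ V} {ι : Type*} [Fintype ι]
    {s : ι → V} (hs : OrthonormalFor c s) (a : ι → ℂ) :
    hnorm c (∑ i, a i • s i) = ‖WithLp.toLp 2 a‖ := by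
  let : NormedAddCommGroup V := c.toNormedAddCommGroup
  let : InnerProductSpace ℂ V := InnerProductSpace.ofCore c.toCore
  have hon : Orthonormal ℂ s := orthonormal_iff_ite.2 hs
  change √(RCLike.re (inner ℂ _ _)) = _
  rw [hon.inner_sum, EuclideanSpace.norm_eq]
  simp [Complex.conj_mul', ← Complex.ofReal_pow]

lemma hnorm_eq_norm_weighted_repr {c : InnerProductSpace.Core ℂ V} {ι : Type*} [Fintype ι]
    (b : Module.Basis ι ℂ V) (w : ι → ℝ)
    (h : OrthonormalFor c fun i => Real.exp (w i) • b i) (v : V) :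
    hnorm c v = ‖WithLp.toLp 2 (fun i => (Real.exp (-w i) : ℂ) * b.repr v i)‖ := by
  rw [← h.hnorm_sum_smul]
  conv_lhs => rw [← b.sum_repr v]
  refine congrArg _ (Finset.sum_congr rfl fun i _ => ?_)
  rw [← Complex.coe_smul, smul_smul, mul_right_comm, ← Complex.ofReal_mul, ← Real.exp_add]
  simp

lemma IsGeodesicRayFor.hnorm_eq {F : ℝ → Submodule ℂ V} {n : ℕ} {b : Module.Basis (Fin n) ℂ V}
    {c : ℝ → InnerProductSpace.Core ℂ V} (h : IsGeodesicRayFor F b c) {t : ℝ} (ht : 0 ≤ t)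
    (v : V) :
    hnorm (c t) v =
      ‖WithLp.toLp 2 (fun i => (Real.exp (-(t * jumpNum F (i.1 + 1))) : ℂ) * b.repr v i)‖ :=
  hnorm_eq_norm_weighted_repr b (fun i => t * jumpNum F (i.1 + 1))
    -- `convert` reconciles the classical `DecidableEq` in `OrthonormalFor` with that of `Fin n`
    (fun i j => by convert h.2.2 t ht i j) v

open Complex in
lemma norm_le_of_norm_I_mul_le {E : Type*} [NormedAddCommGroup E] [NormedSpace ℂ E] {g : ℂ → E}
    (hg : Differentiable ℂ g) {B C : ℝ} (hB : ∀ z : ℂ, 0 ≤ z.re → ‖g z‖ ≤ B)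
    (hC : ∀ s : ℝ, ‖g (s * I)‖ ≤ C) {z : ℂ} (hz : 0 ≤ z.re) : ‖g z‖ ≤ C := by
  refine PhragmenLindelof.right_half_plane_of_bounded_on_real hg.diffContOnCl
    ⟨1, one_lt_two, 0, Asymptotics.IsBigO.of_bound B ?_⟩ ⟨B, ?_⟩ hC hz
  · filter_upwards [Filter.mem_inf_of_right (Filter.mem_principal_self _)] with w hw
    simpa using hB w (le_of_lt hw)
  · refine Filter.eventually_map.2 ?_
    filter_upwards [Filter.eventually_ge_atTop (0 : ℝ)] with s hs
    exact hB s (by simpa using hs)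

section Interpolation

variable {ι κ : Type*}

def expTwist (M : Matrix κ ι ℂ) (e : ι → ℝ) (f : κ → ℝ) (z : ℂ) : Matrix κ ι ℂ :=
  Matrix.of fun j i => M j i * Complex.exp (z * (e i - f j : ℝ))

variable (M : Matrix κ ι ℂ) (e : ι → ℝ) (f : κ → ℝ)

@[simp]
lemma expTwist_zero : expTwist M e f 0 = M := by
  ext j i
  simp [expTwist]

variable [Fintype ι]

lemma expTwist_mulVec_apply (z : ℂ) (x : ι → ℂ) (j : κ) :
    (expTwist M e f z *ᵥ x) j = ∑ i, M j i * Complex.exp (z * (e i - f j : ℝ)) * x i := rfl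

lemma expTwist_mulVec_exp_neg_mul (t : ℝ) (x : ι → ℂ) :
    expTwist M e f t *ᵥ (fun i => (Real.exp (-(t * e i)) : ℂ) * x i) =
      fun j => (Real.exp (-(t * f j)) : ℂ) * (M *ᵥ x) j := by
  ext j
  rw [expTwist_mulVec_apply]
  simp only [Matrix.mulVec, dotProduct, Finset.mul_sum]
  refine Finset.sum_congr rfl fun i _ => ?_
  have hexp : Complex.exp (t * (e i - f j : ℝ)) * (Real.exp (-(t * e i)) : ℂ) =
      Real.exp (-(t * f j)) := by
    push_cast
    rw [← Complex.exp_add]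
    ring_nf
  linear_combination M j i * x i * hexp

lemma expTwist_I_mul_mulVec (s : ℝ) (x : ι → ℂ) :
    expTwist M e f (s * Complex.I) *ᵥ x = fun j =>
      Complex.exp (↑(-(s * f j)) * Complex.I) *
        (M *ᵥ fun i => Complex.exp ((s * e i : ℝ) * Complex.I) * x i) j := by
  ext j
  rw [expTwist_mulVec_apply]
  simp only [Matrix.mulVec, dotProduct, Finset.mul_sum]
  refine Finset.sum_congr rfl fun i _ => ?_
  have hexp : Complex.exp (s * Complex.I * (e i - f j : ℝ)) =
      Complex.exp (↑(-(s * f j)) * Complex.I) * Complex.exp ((s * e i : ℝ) * Complex.I) := by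
    rw [← Complex.exp_add]
    push_cast
    ring_nf
  rw [hexp]
  ring

lemma norm_toLp_unimodular_mul {u : ι → ℂ} (hu : ∀ i, ‖u i‖ = 1) (x : ι → ℂ) :
    ‖WithLp.toLp 2 (fun i => u i * x i)‖ = ‖WithLp.toLp 2 x‖ := by
  simp [EuclideanSpace.norm_eq, hu]

variable {M e f}

lemma norm_expTwist_mulVec_apply_le (hsupp : ∀ j i, M j i ≠ 0 → e i ≤ f j) {z : ℂ}
    (hz : 0 ≤ z.re) (x : ι → ℂ) (j : κ) :
    ‖(expTwist M e f z *ᵥ x) j‖ ≤ ∑ i, ‖M j i‖ * ‖x i‖ := by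
  rw [expTwist_mulVec_apply]
  refine (norm_sum_le _ _).trans (Finset.sum_le_sum fun i _ => ?_)
  by_cases hMji : M j i = 0
  · simp [hMji]
  have hexp : ‖Complex.exp (z * (e i - f j : ℝ))‖ ≤ 1 := by
    rw [Complex.norm_exp, Complex.re_mul_ofReal, Real.exp_le_one_iff]
    exact mul_nonpos_of_nonneg_of_nonpos hz (sub_nonpos.2 (hsupp j i hMji))
  rw [norm_mul, norm_mul]
  gcongr
  exact mul_le_of_le_one_right (norm_nonneg _) hexp

variable [Fintype κ]

lemma norm_expTwist_I_mul_mulVec_le (hM : ∀ x, ‖WithLp.toLp 2 (M *ᵥ x)‖ ≤ ‖WithLp.toLp 2 x‖)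
    (s : ℝ) (x : ι → ℂ) :
    ‖WithLp.toLp 2 (expTwist M e f (s * Complex.I) *ᵥ x)‖ ≤ ‖WithLp.toLp 2 x‖ := by
  rw [expTwist_I_mul_mulVec, norm_toLp_unimodular_mul (fun _ => Complex.norm_exp_ofReal_mul_I _)]
  refine (hM _).trans_eq ?_
  rw [norm_toLp_unimodular_mul (fun _ => Complex.norm_exp_ofReal_mul_I _)]

lemma norm_expTwist_mulVec_le (hsupp : ∀ j i, M j i ≠ 0 → e i ≤ f j)
    (hM : ∀ x, ‖WithLp.toLp 2 (M *ᵥ x)‖ ≤ ‖WithLp.toLp 2 x‖) {t : ℝ} (ht : 0 ≤ t)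
    (x : ι → ℂ) : ‖WithLp.toLp 2 (expTwist M e f t *ᵥ x)‖ ≤ ‖WithLp.toLp 2 x‖ := by
  set y : EuclideanSpace ℂ κ := WithLp.toLp 2 (expTwist M e f t *ᵥ x)
  let g : ℂ → ℂ := fun z => inner ℂ y (WithLp.toLp 2 (expTwist M e f z *ᵥ x))
  have hg_apply : ∀ z, g z = ∑ j, (starRingEnd ℂ) (y j) * (expTwist M e f z *ᵥ x) j :=
    fun z => by simp [g, PiLp.inner_apply, mul_comm]
  have hg : Differentiable ℂ g := by
    simp only [funext hg_apply, expTwist_mulVec_apply]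
    fun_prop
  have hB : ∀ z : ℂ, 0 ≤ z.re → ‖g z‖ ≤ ∑ j, ‖y j‖ * ∑ i, ‖M j i‖ * ‖x i‖ := by
    intro z hz
    rw [hg_apply]
    refine (norm_sum_le _ _).trans (Finset.sum_le_sum fun j _ => ?_)
    rw [norm_mul, Complex.norm_conj]
    gcongr
    exact norm_expTwist_mulVec_apply_le hsupp hz x j
  have hC : ∀ s : ℝ, ‖g (s * Complex.I)‖ ≤ ‖y‖ * ‖WithLp.toLp 2 x‖ := fun s =>
    (norm_inner_le_norm _ _).trans (by gcongr; exact norm_expTwist_I_mul_mulVec_le hM s x)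
  have hyy : ‖y‖ * ‖y‖ ≤ ‖y‖ * ‖WithLp.toLp 2 x‖ := by
    have := norm_le_of_norm_I_mul_le hg hB hC (z := t) (by simpa using ht)
    rwa [show g t = (‖y‖ : ℂ) ^ 2 from inner_self_eq_norm_sq_to_K y, norm_pow,
      Complex.norm_real, norm_norm, sq] at this
  by_contra! hlt
  nlinarith [norm_nonneg (WithLp.toLp 2 x : EuclideanSpace ℂ ι)]

end Interpolation

section QuotNorm

variable {Q : Type*} [AddCommGroup Q] [Module ℂ Q]

lemma quotNorm_apply_le (π : V →ₗ[ℂ] Q) {N : V → ℝ} (hN : ∀ v, 0 ≤ N v) (v : V) :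
    quotNorm π N (π v) ≤ N v :=
  csInf_le ⟨0, by rintro r ⟨u, -, rfl⟩; exact hN u⟩ ⟨v, rfl, rfl⟩

lemma le_quotNorm {π : V →ₗ[ℂ] Q} (hπ : Function.Surjective π) {N : V → ℝ} {N' : Q → ℝ}
    (h : ∀ v, N' (π v) ≤ N v) (q : Q) : N' q ≤ quotNorm π N q := by
  obtain ⟨v, rfl⟩ := hπ q
  exact le_csInf ⟨N v, v, rfl, rfl⟩ fun r ⟨u, hu, hr⟩ => hr ▸ hu ▸ h u

end QuotNorm

lemma filtChi_nonneg (F : ℝ → Submodule ℂ V) (v : V) : 0 ≤ filtChi F v := by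
  unfold filtChi
  split_ifs
  exacts [le_rfl, (Real.exp_pos _).le]

namespace IsVSFiltration

variable {F : ℝ → Submodule ℂ V} (hF : IsVSFiltration F)
include hF

lemma le_filtWeight {v : V} (hv : v ≠ 0) {l : ℝ} (h : v ∈ F l) : l ≤ filtWeight F v := by
  obtain ⟨t₁, h₁⟩ := hF.eventually_bot
  refine le_csSup ⟨t₁, fun u hu => ?_⟩ h
  by_contra! hlt
  exact hv (by simpa [h₁ u hlt.le] using hu)

lemma mem_of_lt_filtWeight {v : V} {l : ℝ} (h : l < filtWeight F v) : v ∈ F l := by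
  obtain ⟨t₀, h₀⟩ := hF.eventually_top
  obtain ⟨l', hl', hll'⟩ := exists_lt_of_lt_csSup ⟨t₀, by simp [h₀ t₀ le_rfl]⟩ h
  exact hF.antitone hll'.le hl'

lemma le_jumpNum {j : ℕ} (hj : 0 < j) {l : ℝ} (h : j ≤ Module.finrank ℂ (F l)) :
    l ≤ jumpNum F j := by
  obtain ⟨t₁, h₁⟩ := hF.eventually_bot
  refine le_csSup ⟨t₁, fun u hu => ?_⟩ h
  by_contra! hlt
  have hu' : j ≤ Module.finrank ℂ (F u) := hu
  rw [h₁ u hlt.le, finrank_bot] at hu'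
  omega

variable [FiniteDimensional ℂ V] {n : ℕ} {b : Module.Basis (Fin n) ℂ V}
  (hb : ∀ i, b i ∈ F (jumpNum F (i.1 + 1)))
include hb

open Finset in
lemma eq_span_adapted_basis (l : ℝ) :
    F l = Submodule.span ℂ (b '' {i | l ≤ jumpNum F (i.1 + 1)}) := by
  set S : Set (Fin n) := {i | l ≤ jumpNum F (i.1 + 1)}
  have hle : Submodule.span ℂ (b '' S) ≤ F l :=
    Submodule.span_le.2 <| by rintro _ ⟨i, hi, rfl⟩; exact hF.antitone hi (hb i)
  have hrank : Module.finrank ℂ (Submodule.span ℂ (b '' S)) = Fintype.card S := by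
    rw [← finrank_span_eq_card (b.linearIndependent.comp _ Subtype.val_injective),
      Set.range_comp, Subtype.range_coe]
  have hdim : Module.finrank ℂ (F l) ≤ n :=
    (Submodule.finrank_le _).trans_eq (by simp [Module.finrank_eq_card_basis b])
  refine (Submodule.eq_of_le_of_finrank_le hle ?_).symm
  calc Module.finrank ℂ (F l) = #{i : Fin n | i < Module.finrank ℂ (F l)} := by
        rw [Fin.card_filter_val_lt, min_eq_right hdim]
    _ ≤ Fintype.card S := by
        rw [← Set.toFinset_card]
        refine Finset.card_le_card fun i hi => ?_
        simp only [Finset.mem_filter, Finset.mem_univ, true_and] at hi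
        simpa [S] using hF.le_jumpNum i.succ_pos hi
    _ = _ := hrank.symm

lemma repr_eq_zero_of_mem {q : V} {l : ℝ} (hq : q ∈ F l) {i : Fin n}
    (hi : jumpNum F (i.1 + 1) < l) : b.repr q i = 0 := by
  rw [hF.eq_span_adapted_basis hb l, b.mem_span_image] at hq
  by_contra h
  exact hi.not_ge (hq (Finsupp.mem_support_iff.2 h))

lemma filtWeight_le_jumpNum {q : V} {i : Fin n} (hq : b.repr q i ≠ 0) :
    filtWeight F q ≤ jumpNum F (i.1 + 1) := by
  by_contra! hlt
  obtain ⟨l, hil, hl⟩ := exists_between hlt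
  exact hq (hF.repr_eq_zero_of_mem hb (hF.mem_of_lt_filtWeight hl) hil)

end IsVSFiltration

lemma IsVSFiltration.le_filtWeight_map {Q : Type*} [AddCommGroup Q] [Module ℂ Q]
    {π : V →ₗ[ℂ] Q} {F : ℝ → Submodule ℂ V} {G : ℝ → Submodule ℂ Q} (hF : IsVSFiltration F)
    (hchi : ∀ q, filtChi G q ≤ quotNorm π (filtChi F) q) {v : V} (hv : π v ≠ 0) {l : ℝ}
    (h : v ∈ F l) : l ≤ filtWeight G (π v) := by
  have hv0 : v ≠ 0 := fun h0 => hv (by simp [h0])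
  have hexp : Real.exp (-filtWeight G (π v)) ≤ Real.exp (-l) :=
    calc Real.exp (-filtWeight G (π v)) = filtChi G (π v) := (if_neg hv).symm
      _ ≤ quotNorm π (filtChi F) (π v) := hchi _
      _ ≤ filtChi F v := quotNorm_apply_le π (filtChi_nonneg F) v
      _ = Real.exp (-filtWeight F v) := if_neg hv0
      _ ≤ Real.exp (-l) := Real.exp_le_exp.2 (neg_le_neg (hF.le_filtWeight hv0 h))
  simpa using hexp

theorem nonarchimedean_stein_weiss_general
    {V Q : Type*} [AddCommGroup V] [Module ℂ V]
    [AddCommGroup Q] [Module ℂ Q] [FiniteDimensional ℂ Q]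
    (π : V →ₗ[ℂ] Q) (hπ : Function.Surjective π)
    {n m : ℕ} (F : ℝ → Submodule ℂ V) (hF : IsVSFiltration F)
    (G : ℝ → Submodule ℂ Q) (hG : IsVSFiltration G)
    (bV : Module.Basis (Fin n) ℂ V) (cV : ℝ → InnerProductSpace.Core ℂ V)
    (bQ : Module.Basis (Fin m) ℂ Q) (cQ : ℝ → InnerProductSpace.Core ℂ Q)
    (hrayV : IsGeodesicRayFor F (⇑bV) cV) (hrayQ : IsGeodesicRayFor G (⇑bQ) cQ)
    (hdom_norm : ∀ q : Q, hnorm (cQ 0) q ≤ quotNorm π (hnorm (cV 0)) q)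
    (hdom_chi : ∀ q : Q, filtChi G q ≤ quotNorm π (filtChi F) q) :
    ∀ t : ℝ, 0 ≤ t → ∀ q : Q, hnorm (cQ t) q ≤ quotNorm π (hnorm (cV t)) q := by
  set M := LinearMap.toMatrix bV bQ π
  set e : Fin n → ℝ := fun i => jumpNum F (i.1 + 1)
  set f : Fin m → ℝ := fun j => jumpNum G (j.1 + 1)
  have hcoord : ∀ t, 0 ≤ t → ∀ v, hnorm (cQ t) (π v) = ‖WithLp.toLp 2
      (expTwist M e f t *ᵥ fun i => (Real.exp (-(t * e i)) : ℂ) * bV.repr v i)‖ := by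
    intro t ht v
    rw [hrayQ.hnorm_eq ht, expTwist_mulVec_exp_neg_mul, LinearMap.toMatrix_mulVec_repr]
  have hsupp : ∀ j i, M j i ≠ 0 → e i ≤ f j := by
    intro j i hji
    simp only [M, LinearMap.toMatrix_apply] at hji
    exact (hF.le_filtWeight_map hdom_chi (fun h => hji (by simp [h])) (hrayV.2.1 i)).trans
      (hG.filtWeight_le_jumpNum hrayQ.2.1 hji)
  have hM : ∀ x, ‖WithLp.toLp 2 (M *ᵥ x)‖ ≤ ‖WithLp.toLp 2 x‖ := by
    intro x
    obtain ⟨v, rfl⟩ : ∃ v, ⇑(bV.repr v) = x :=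
      ⟨bV.equivFun.symm x, bV.equivFun.apply_symm_apply x⟩
    have hv := (hdom_norm (π v)).trans
      (quotNorm_apply_le π (N := hnorm (cV 0)) (fun _ => Real.sqrt_nonneg _) v)
    simpa [hcoord 0 le_rfl, hrayV.hnorm_eq le_rfl] using hv
  intro t ht
  refine le_quotNorm hπ fun v => ?_
  rw [hcoord t ht, hrayV.hnorm_eq ht]
  exact norm_expTwist_mulVec_le hsupp hM ht _

/-- non-Archimedean interpolation theorem of Stein–Weiss: if the quotient of
`H₀` dominates `H₁` and the quotient of `χ_𝓕` dominates `χ_𝓖`, then for every `t ≥ 0` the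
quotient of `H_t^𝓕` dominates `H_t^𝓖`. -/
theorem nonarchimedean_stein_weiss
    {V Q : Type*} [AddCommGroup V] [Module ℂ V] [FiniteDimensional ℂ V]
    [AddCommGroup Q] [Module ℂ Q] [FiniteDimensional ℂ Q]
    (π : V →ₗ[ℂ] Q) (hπ : Function.Surjective π)
    {n m : ℕ} (F : ℝ → Submodule ℂ V) (hF : IsVSFiltration F)
    (G : ℝ → Submodule ℂ Q) (hG : IsVSFiltration G)
    (bV : Module.Basis (Fin n) ℂ V) (cV : ℝ → InnerProductSpace.Core ℂ V)
    (bQ : Module.Basis (Fin m) ℂ Q) (cQ : ℝ → InnerProductSpace.Core ℂ Q)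
    (hrayV : IsGeodesicRayFor F (⇑bV) cV) (hrayQ : IsGeodesicRayFor G (⇑bQ) cQ)
    (hdom_norm : ∀ q : Q, hnorm (cQ 0) q ≤ quotNorm π (hnorm (cV 0)) q)
    (hdom_chi : ∀ q : Q, filtChi G q ≤ quotNorm π (filtChi F) q) :
    ∀ t : ℝ, 0 ≤ t → ∀ q : Q, hnorm (cQ t) q ≤ quotNorm π (hnorm (cV t)) q :=
  nonarchimedean_stein_weiss_general π hπ F hF G hG bV cV bQ cQ hrayV hrayQ hdom_norm hdom_chi

end
end

section
/- Let V be an n-dimensional complex vector space (n ≥ 1) and let H₀, H₁ be Hermitian norms on V that are both diagonalized by a common basis e₁,…,e_n (the basis is orthogonal for both inner products). Then for every p ∈ [1,∞): d_p(H₀, H₁)^p = d_p(H₀, H₀ ∨ H₁)^p + d_p(H₁, H₀ ∨ H₁)^p. -/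
open scoped BigOperators
open Filter Classical

noncomputable section

variable {V : Type*} [AddCommGroup V] [Module ℂ V]

/-- A filtration on a complex vector space `V`: a left-continuous, decreasing family of
subspaces which equals `⊤` for `t` small enough and `⊥` for `t` large enough. -/
structure IsFiltration' (F : ℝ → Submodule ℂ V) : Prop where
  antitone : ∀ ⦃s t : ℝ⦄, s ≤ t → F t ≤ F s
  left_cont : ∀ t : ℝ, ∃ ε > 0, ∀ δ : ℝ, 0 < δ → δ < ε → F (t - δ) = F t
  eventually_top : ∃ t₀ : ℝ, ∀ t ≤ t₀, F t = ⊤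
  eventually_bot : ∃ t₁ : ℝ, ∀ t, t₁ ≤ t → F t = ⊥

/-! When both Hermitian norms are diagonal in `e`, the min-max characterization shows that the
relative spectrum is the decreasing rearrangement of `aᵢ = log (‖eᵢ‖₁ / ‖eᵢ‖₀)`: a subspace of
dimension `j` meets the span of the basis vectors with the `n - j + 1` smallest ratios, and the span
of those with the `j` largest ratios attains the bound. The norm `H₀ ∨ H₁` is diagonal in `e` as
well, with ratios `aᵢ⁺` over `H₀` and `aᵢ⁻` over `H₁`, so the identity reduces termwise to
`|a| ^ p = (a⁺) ^ p + (a⁻) ^ p`. -/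

open Module

lemma log_div_swap (x y : ℝ) : Real.log (x / y) = -Real.log (y / x) := by
  rw [← Real.log_inv, inv_div]

section HermitianNormsInOrthogonalBasis

variable {ι : Type*} [Fintype ι] (e : Basis ι ℂ V)

lemma hnorm_nonneg (c : InnerProductSpace.Core ℂ V) (w : V) : 0 ≤ hnorm c w :=
  Real.sqrt_nonneg _

lemma hnorm_pos (c : InnerProductSpace.Core ℂ V) {w : V} (hw : w ≠ 0) : 0 < hnorm c w := by
  let _ : NormedAddCommGroup V := InnerProductSpace.Core.toNormedAddCommGroup (cd := c)
  exact norm_pos_iff.2 hw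

lemma hnorm_sq_eq_sum {c : InnerProductSpace.Core ℂ V} (he : OrthogonalFor c e) (w : V) :
    hnorm c w ^ 2 = ∑ i, ‖e.repr w i‖ ^ 2 * hnorm c (e i) ^ 2 := by
  let _ : NormedAddCommGroup V := InnerProductSpace.Core.toNormedAddCommGroup (cd := c)
  let _ : InnerProductSpace ℂ V := InnerProductSpace.ofCore c.toCore
  change ‖w‖ ^ 2 = ∑ i, ‖e.repr w i‖ ^ 2 * ‖e i‖ ^ 2
  have hdiag : ∀ i, inner ℂ (e.repr w i • e i) w = ((‖e.repr w i‖ ^ 2 * ‖e i‖ ^ 2 : ℝ) : ℂ) := by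
    intro i
    nth_rw 2 [← e.sum_repr w]
    rw [inner_sum, Finset.sum_eq_single i (fun j _ hji => ?_) (by simp)]
    · rw [inner_smul_left, inner_smul_right, inner_self_eq_norm_sq_to_K, ← mul_assoc,
        RCLike.conj_mul]
      norm_cast
    · rw [inner_smul_left, inner_smul_right, show inner ℂ (e i) (e j) = 0 from he i j hji.symm,
        mul_zero, mul_zero]
  have h := congrArg Complex.re (congrArg (inner ℂ · w) (e.sum_repr w))
  simp only [sum_inner, hdiag, ← Complex.ofReal_sum, Complex.ofReal_re] at h
  exact h ▸ norm_sq_eq_re_inner (𝕜 := ℂ) w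

lemma hnorm_le_mul_of_mem_span {c c' : InnerProductSpace.Core ℂ V} (he : OrthogonalFor c e)
    (he' : OrthogonalFor c' e) {s : Set ι} {r : ℝ} (hr : 0 ≤ r)
    (hs : ∀ i ∈ s, hnorm c (e i) ≤ r * hnorm c' (e i)) {w : V}
    (hw : w ∈ Submodule.span ℂ (e '' s)) : hnorm c w ≤ r * hnorm c' w := by
  have hsupp : ∀ i, e.repr w i ≠ 0 → i ∈ s := fun i hi =>
    e.mem_span_image.1 hw (Finsupp.mem_support_iff.2 hi)
  have hsq : hnorm c w ^ 2 ≤ (r * hnorm c' w) ^ 2 := by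
    rw [mul_pow, hnorm_sq_eq_sum e he, hnorm_sq_eq_sum e he', Finset.mul_sum]
    refine Finset.sum_le_sum fun i _ => ?_
    by_cases hi : e.repr w i = 0
    · simp [hi]
    · have := pow_le_pow_left₀ (hnorm_nonneg c _) (hs i (hsupp i hi)) 2
      rw [mul_pow] at this
      nlinarith [sq_nonneg ‖e.repr w i‖]
  exact (pow_le_pow_iff_left₀ (hnorm_nonneg c w) (by positivity [hnorm_nonneg c' w])
    two_ne_zero).1 hsq

lemma log_hnorm_div_le_of_mem_span {c₀ c₁ : InnerProductSpace.Core ℂ V}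
    (he₀ : OrthogonalFor c₀ e) (he₁ : OrthogonalFor c₁ e) {s : Set ι} {t : ℝ}
    (hs : ∀ i ∈ s, Real.log (hnorm c₁ (e i) / hnorm c₀ (e i)) ≤ t) {w : V}
    (hw : w ∈ Submodule.span ℂ (e '' s)) (hw0 : w ≠ 0) :
    Real.log (hnorm c₁ w / hnorm c₀ w) ≤ t := by
  have hlog_le {v : V} (hv : v ≠ 0) :
      Real.log (hnorm c₁ v / hnorm c₀ v) ≤ t ↔ hnorm c₁ v ≤ Real.exp t * hnorm c₀ v := by
    rw [Real.log_le_iff_le_exp (div_pos (hnorm_pos c₁ hv) (hnorm_pos c₀ hv)),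
      div_le_iff₀ (hnorm_pos c₀ hv)]
  exact (hlog_le hw0).2 <| hnorm_le_mul_of_mem_span e he₁ he₀ (Real.exp_pos t).le
    (fun i hi => (hlog_le (e.ne_zero i)).1 (hs i hi)) hw

lemma le_log_hnorm_div_of_mem_span {c₀ c₁ : InnerProductSpace.Core ℂ V}
    (he₀ : OrthogonalFor c₀ e) (he₁ : OrthogonalFor c₁ e) {s : Set ι} {t : ℝ}
    (hs : ∀ i ∈ s, t ≤ Real.log (hnorm c₁ (e i) / hnorm c₀ (e i))) {w : V}
    (hw : w ∈ Submodule.span ℂ (e '' s)) (hw0 : w ≠ 0) :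
    t ≤ Real.log (hnorm c₁ w / hnorm c₀ w) := by
  rw [log_div_swap, le_neg]
  exact log_hnorm_div_le_of_mem_span e he₁ he₀
    (fun i hi => by rw [log_div_swap, neg_le, neg_neg]; exact hs i hi) hw hw0

end HermitianNormsInOrthogonalBasis

lemma finrank_span_image_finset {K M ι : Type*} [DivisionRing K] [AddCommGroup M] [Module K M]
    (e : Basis ι K M) (s : Finset ι) :
    finrank K (Submodule.span K (e '' s)) = s.card := by
  have h := finrank_span_eq_card (e.linearIndependent.comp _ Subtype.coe_injective :
    LinearIndependent K fun i : (s : Set ι) => e i)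
  rw [Set.range_comp, Subtype.range_coe] at h
  simpa using h

lemma exists_ne_zero_mem_inf_of_finrank_lt_add {K M : Type*} [DivisionRing K] [AddCommGroup M]
    [Module K M] [FiniteDimensional K M] {W U : Submodule K M}
    (h : finrank K M < finrank K W + finrank K U) : ∃ x ≠ 0, x ∈ W ∧ x ∈ U := by
  have hsum := Submodule.finrank_sup_add_finrank_inf_eq W U
  have hsup := Submodule.finrank_le (W ⊔ U)
  obtain ⟨x, hx⟩ := Module.finrank_pos_iff_exists_ne_zero.1 (show 0 < finrank K ↥(W ⊓ U) by omega)
  exact ⟨x, fun h => hx (Subtype.ext h), x.2.1, x.2.2⟩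

lemma relSpec_eq_of_basis {n : ℕ} (e : Basis (Fin n) ℂ V) {N₀ N₁ : V → ℝ} (a : Fin n → ℝ)
    (hle : ∀ j, ∀ w ∈ Submodule.span ℂ (e '' ↑(Finset.Ici j)), w ≠ 0 →
      Real.log (N₁ w / N₀ w) ≤ a j)
    (hge : ∀ j, ∀ w ∈ Submodule.span ℂ (e '' ↑(Finset.Iic j)), w ≠ 0 →
      a j ≤ Real.log (N₁ w / N₀ w))
    (j : Fin n) : relSpec N₀ N₁ (j + 1) = a j := by
  have := Module.Finite.of_basis e
  let S (W : Submodule ℂ V) : Set ℝ := {x | ∃ w ∈ W, w ≠ 0 ∧ x = Real.log (N₁ w / N₀ w)}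
  have hbdd (W : Submodule ℂ V) : BddBelow (S W) := by
    let last : Fin n := ⟨n - 1, Nat.sub_one_lt_of_lt j.2⟩
    refine ⟨a last, ?_⟩
    rintro _ ⟨w, -, hw0, rfl⟩
    exact hge last w (e.mem_span_image.2 fun i _ =>
      Finset.mem_coe.2 (Finset.mem_Iic.2 (Nat.le_sub_one_of_lt i.2))) hw0
  let infs : Set ℝ := {r | ∃ W : Submodule ℂ V, finrank ℂ W = j + 1 ∧ r = sInf (S W)}
  have hub : ∀ r ∈ infs, r ≤ a j := by
    rintro _ ⟨W, hW, rfl⟩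
    obtain ⟨x, hx0, hxW, hxU⟩ := exists_ne_zero_mem_inf_of_finrank_lt_add (W := W)
      (U := Submodule.span ℂ (e '' ↑(Finset.Ici j))) (by
        rw [finrank_span_image_finset, Fin.card_Ici, hW, finrank_eq_card_basis e,
          Fintype.card_fin]
        omega)
    exact (csInf_le (hbdd W) ⟨x, hxW, hx0, rfl⟩).trans (hle j x hxU hx0)
  have hattained : sInf (S (Submodule.span ℂ (e '' ↑(Finset.Iic j)))) = a j := by
    have hej : e j ∈ Submodule.span ℂ (e '' ↑(Finset.Iic j)) :=
      Submodule.subset_span ⟨j, by simp, rfl⟩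
    have hej' : e j ∈ Submodule.span ℂ (e '' ↑(Finset.Ici j)) :=
      Submodule.subset_span ⟨j, by simp, rfl⟩
    refine le_antisymm ?_ (le_csInf ⟨_, e j, hej, e.ne_zero j, rfl⟩ ?_)
    · exact (csInf_le (hbdd _) ⟨e j, hej, e.ne_zero j, rfl⟩).trans (hle j (e j) hej' (e.ne_zero j))
    · rintro _ ⟨w, hw, hw0, rfl⟩
      exact hge j w hw hw0
  have hmem : a j ∈ infs :=
    ⟨_, by rw [finrank_span_image_finset, Fin.card_Iic], hattained.symm⟩
  exact le_antisymm (csSup_le ⟨_, hmem⟩ hub) (le_csSup ⟨_, hub⟩ hmem)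

lemma relSpec_hnorm_eq_of_antitone {n : ℕ} (e : Basis (Fin n) ℂ V)
    {c₀ c₁ : InnerProductSpace.Core ℂ V} (he₀ : OrthogonalFor c₀ e) (he₁ : OrthogonalFor c₁ e)
    (hanti : Antitone fun i => Real.log (hnorm c₁ (e i) / hnorm c₀ (e i))) (j : Fin n) :
    relSpec (hnorm c₀) (hnorm c₁) (j + 1) = Real.log (hnorm c₁ (e j) / hnorm c₀ (e j)) :=
  relSpec_eq_of_basis e _
    (fun _ _ hw hw0 => log_hnorm_div_le_of_mem_span e he₀ he₁
      (fun _ hi => hanti (Finset.mem_Ici.1 hi)) hw hw0)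
    (fun _ _ hw hw0 => le_log_hnorm_div_of_mem_span e he₀ he₁
      (fun _ hi => hanti (Finset.mem_Iic.1 hi)) hw hw0) j

lemma sum_relSpec_hnorm {n : ℕ} (e : Basis (Fin n) ℂ V)
    {c₀ c₁ : InnerProductSpace.Core ℂ V} (he₀ : OrthogonalFor c₀ e) (he₁ : OrthogonalFor c₁ e)
    (g : ℝ → ℝ) :
    ∑ j ∈ Finset.Icc 1 (finrank ℂ V), g (relSpec (hnorm c₀) (hnorm c₁) j) =
      ∑ i, g (Real.log (hnorm c₁ (e i) / hnorm c₀ (e i))) := by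
  let a i := Real.log (hnorm c₁ (e i) / hnorm c₀ (e i))
  let σ := Tuple.sort (OrderDual.toDual ∘ a)
  have hanti : Antitone (a ∘ σ) :=
    monotone_toDual_comp_iff.1 (Tuple.monotone_sort (OrderDual.toDual ∘ a) :)
  let e' := e.reindex σ.symm
  have he' : ⇑e' = e ∘ σ := by ext; simp [e']
  have horth {c : InnerProductSpace.Core ℂ V} (he : OrthogonalFor c e) : OrthogonalFor c e' :=
    fun i j hij => by simpa [he'] using he (σ i) (σ j) (σ.injective.ne hij)
  have hreindex (f : ℕ → ℝ) : ∑ j ∈ Finset.Icc 1 n, f j = ∑ i : Fin n, f (i + 1) := by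
    rw [Fin.sum_univ_eq_sum_range (fun i => f (i + 1)), Finset.range_eq_Ico,
      Finset.sum_Ico_add']
    rfl
  rw [finrank_eq_card_basis e, Fintype.card_fin, hreindex, ← Equiv.sum_comp σ fun i => g (a i)]
  refine Finset.sum_congr rfl fun i _ => ?_
  have := relSpec_hnorm_eq_of_antitone e' (horth he₀) (horth he₁) (by rw [he']; exact hanti) i
  simp only [he', Function.comp_apply] at this
  rw [this]

lemma dp_rpow {p : ℝ} (hp : p ≠ 0) (N₀ N₁ : V → ℝ) :
    dp p N₀ N₁ ^ p =
      (∑ j ∈ Finset.Icc 1 (finrank ℂ V), |relSpec N₀ N₁ j| ^ p) / finrank ℂ V := by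
  rw [dp, ← Real.rpow_mul (by positivity), one_div_mul_cancel hp, Real.rpow_one]

lemma abs_rpow_eq_posPart_rpow_add_negPart_rpow {p : ℝ} (hp : p ≠ 0) (x : ℝ) :
    |x| ^ p = x⁺ ^ p + x⁻ ^ p := by
  rcases le_total 0 x with h | h
  · rw [abs_of_nonneg h, posPart_eq_self.2 h, negPart_eq_zero.2 h, Real.zero_rpow hp, add_zero]
  · rw [abs_of_nonpos h, posPart_eq_zero.2 h, negPart_eq_neg.2 h, Real.zero_rpow hp, zero_add]

lemma log_max_div {x y : ℝ} (hx : 0 < x) (hy : 0 < y) :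
    Real.log (max x y / x) = (Real.log (y / x))⁺ := by
  rcases le_total y x with h | h
  · rw [max_eq_left h, div_self hx.ne', Real.log_one,
      posPart_eq_zero.2 (Real.log_nonpos (by positivity) ((div_le_one hx).2 h))]
  · rw [max_eq_right h, posPart_eq_self.2 (Real.log_nonneg ((one_le_div hx).2 h))]

theorem dp_pow_max_decomposition_general
    {V : Type*} [AddCommGroup V] [Module ℂ V]
    {n : ℕ} (e : Module.Basis (Fin n) ℂ V) (c₀ c₁ cmax : InnerProductSpace.Core ℂ V)
    (he₀ : OrthogonalFor c₀ (⇑e)) (he₁ : OrthogonalFor c₁ (⇑e))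
    -- `cmax` is the Hermitian norm `H₀ ∨ H₁`
    (hemax : OrthogonalFor cmax (⇑e))
    (hmax : ∀ i : Fin n, hnorm cmax (e i) = max (hnorm c₀ (e i)) (hnorm c₁ (e i)))
    (p : ℝ) (hp : 1 ≤ p) :
    dp p (hnorm c₀) (hnorm c₁) ^ p =
      dp p (hnorm c₀) (hnorm cmax) ^ p + dp p (hnorm c₁) (hnorm cmax) ^ p := by
  have hp0 : p ≠ 0 := by linarith
  rw [dp_rpow hp0, dp_rpow hp0, dp_rpow hp0, ← add_div,
    sum_relSpec_hnorm e he₀ he₁ fun x => |x| ^ p, sum_relSpec_hnorm e he₀ hemax fun x => |x| ^ p,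
    sum_relSpec_hnorm e he₁ hemax fun x => |x| ^ p, ← Finset.sum_add_distrib]
  congr 1
  refine Finset.sum_congr rfl fun i _ => ?_
  have h₀ := hnorm_pos c₀ (e.ne_zero i)
  have h₁ := hnorm_pos c₁ (e.ne_zero i)
  rw [hmax, log_max_div h₀ h₁, max_comm, log_max_div h₁ h₀, log_div_swap (hnorm c₀ (e i)),
    posPart_neg, abs_of_nonneg (posPart_nonneg _), abs_of_nonneg (negPart_nonneg _)]
  exact abs_rpow_eq_posPart_rpow_add_negPart_rpow hp0 _

/-- if two Hermitian norms `H₀`, `H₁` are diagonalized by a common basis, then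
for every `p ∈ [1,∞)` one has
`d_p(H₀,H₁)^p = d_p(H₀, H₀∨H₁)^p + d_p(H₁, H₀∨H₁)^p`. -/
theorem dp_pow_max_decomposition
    {V : Type*} [AddCommGroup V] [Module ℂ V] [FiniteDimensional ℂ V]
    {n : ℕ} (hn : 1 ≤ n) (hdim : Module.finrank ℂ V = n)
    (e : Module.Basis (Fin n) ℂ V) (c₀ c₁ cmax : InnerProductSpace.Core ℂ V)
    (he₀ : OrthogonalFor c₀ (⇑e)) (he₁ : OrthogonalFor c₁ (⇑e))
    -- `cmax` is the Hermitian norm `H₀ ∨ H₁`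
    (hemax : OrthogonalFor cmax (⇑e))
    (hmax : ∀ i : Fin n, hnorm cmax (e i) = max (hnorm c₀ (e i)) (hnorm c₁ (e i)))
    (p : ℝ) (hp : 1 ≤ p) :
    dp p (hnorm c₀) (hnorm c₁) ^ p =
      dp p (hnorm c₀) (hnorm cmax) ^ p + dp p (hnorm c₁) (hnorm cmax) ^ p :=
  dp_pow_max_decomposition_general e c₀ c₁ cmax he₀ he₁ hemax hmax p hp

end
end
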